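/- Let ε, δ be real parameters and let 𝒫₁ and 𝒫₂ be the polynomial functions of (q₁,q₂,p₁,p₂) ∈ ℝ⁴ defined by 𝒫₁ = (δ²ε²/8)·[x₁(3y₀+3y₁−y₂) + x₂(3y₀+3y₂−y₁) + x₃(3y₁+3y₂−y₀)] + (δε/2)·[x₁x₂y₀(y₂−y₁) + x₁x₃y₁(y₀−y₂) + x₂x₃y₂(y₁−y₀)] + x₁x₂x₃y₀y₁y₂ and 𝒫₂ = δε·[x₁(y₀−y₁) + x₂(y₂−y₀) + x₃(y₁−y₂)] + x₁x₂y₀(y₁+y₂) + x₁x₃y₁(y₀+y₂) + x₂x₃y₂(y₀+y₁), where x₁ = ε−p₁, x₂ = ε+p₂, x₃ = ε+p₁−p₂, y₀ = ε+q₁+q₂, y₁ = ε−q₁, y₂ = ε−q₂. Then 𝒫₁ and 𝒫₂ are in involution with respect to the canonical Poisson bracket: {𝒫₁, 𝒫₂} = 0 identically on ℝ⁴. -/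

import Mathlib

noncomputable section

/-- The first invariant `𝒫₁` of the two-degrees-of-freedom KdV map. -/
def kdv2P1 (ε δ q1 q2 p1 p2 : ℝ) : ℝ :=
  let x1 := ε - p1; let x2 := ε + p2; let x3 := ε + p1 - p2
  let y0 := ε + q1 + q2; let y1 := ε - q1; let y2 := ε - q2
  δ ^ 2 * ε ^ 2 / 8 *
      (x1 * (3 * y0 + 3 * y1 - y2) + x2 * (3 * y0 + 3 * y2 - y1) +
        x3 * (3 * y1 + 3 * y2 - y0)) +
    δ * ε / 2 *
      (x1 * x2 * y0 * (y2 - y1) + x1 * x3 * y1 * (y0 - y2) + x2 * x3 * y2 * (y1 - y0)) +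
    x1 * x2 * x3 * y0 * y1 * y2

/-- The second invariant `𝒫₂` of the two-degrees-of-freedom KdV map. -/
def kdv2P2 (ε δ q1 q2 p1 p2 : ℝ) : ℝ :=
  let x1 := ε - p1; let x2 := ε + p2; let x3 := ε + p1 - p2
  let y0 := ε + q1 + q2; let y1 := ε - q1; let y2 := ε - q2
  δ * ε * (x1 * (y0 - y1) + x2 * (y2 - y0) + x3 * (y1 - y2)) +
    x1 * x2 * y0 * (y1 + y2) + x1 * x3 * y1 * (y0 + y2) + x2 * x3 * y2 * (y0 + y1)

/-- The canonical Poisson bracket on `ℝ⁴` with coordinates `(q₁,q₂,p₁,p₂)`: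
`{F,G} = Σⱼ (∂F/∂qⱼ ∂G/∂pⱼ − ∂F/∂pⱼ ∂G/∂qⱼ)`, with partial derivatives expressed
as derivatives of one-variable slices. -/
def poissonBracket4 (F G : ℝ → ℝ → ℝ → ℝ → ℝ) (q1 q2 p1 p2 : ℝ) : ℝ :=
  deriv (fun s => F s q2 p1 p2) q1 * deriv (fun s => G q1 q2 s p2) p1 +
    deriv (fun s => F q1 s p1 p2) q2 * deriv (fun s => G q1 q2 p1 s) p2 -
    deriv (fun s => F q1 q2 s p2) p1 * deriv (fun s => G s q2 p1 p2) q1 -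
    deriv (fun s => F q1 q2 p1 s) p2 * deriv (fun s => G q1 s p1 p2) q2

/-! In the paper's variables `xᵢ`, `yⱼ` each canonical coordinate moves exactly two of them in
opposite directions (`q₁` raises `y₀` and lowers `y₁`, `p₁` raises `x₃` and lowers `x₁`, …),
so the partial derivatives of `𝒫₁` and `𝒫₂` stay short when written in these variables.
Substituting them into the bracket, `{𝒫₁,𝒫₂}` vanishes as a polynomial identity. -/

section PartialDerivatives

variable (ε δ q1 q2 p1 p2 : ℝ)

local notation "x₁" => ε - p1
local notation "x₂" => ε + p2
local notation "x₃" => ε + p1 - p2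
local notation "y₀" => ε + q1 + q2
local notation "y₁" => ε - q1
local notation "y₂" => ε - q2

theorem deriv_kdv2P1_q1 : deriv (fun s => kdv2P1 ε δ s q2 p1 p2) q1 =
    δ ^ 2 * ε ^ 2 / 2 * (x₂ - x₃) +
      δ * ε / 2 * (x₁ * x₂ * (y₀ - y₁ + y₂) + x₁ * x₃ * (y₁ + y₂ - y₀) - 2 * x₂ * x₃ * y₂) +
      x₁ * x₂ * x₃ * y₂ * (y₁ - y₀) := by
  simp (disch := fun_prop) only [kdv2P1, deriv_fun_add, deriv_fun_sub, deriv_fun_mul, deriv_const,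
    deriv_const_add_id, deriv_const_sub_id]
  ring

theorem deriv_kdv2P1_q2 : deriv (fun s => kdv2P1 ε δ q1 s p1 p2) q2 =
    δ ^ 2 * ε ^ 2 / 2 * (x₁ - x₃) +
      δ * ε / 2 * (x₁ * x₂ * (y₂ - y₁ - y₀) + 2 * x₁ * x₃ * y₁ + x₂ * x₃ * (y₀ - y₁ - y₂)) +
      x₁ * x₂ * x₃ * y₁ * (y₂ - y₀) := by
  simp (disch := fun_prop) only [kdv2P1, deriv_fun_add, deriv_fun_sub, deriv_fun_mul, deriv_const,
    deriv_const_add_id, deriv_const_sub_id]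
  ring

theorem deriv_kdv2P1_p1 : deriv (fun s => kdv2P1 ε δ q1 q2 s p2) p1 =
    δ ^ 2 * ε ^ 2 / 2 * (y₂ - y₀) +
      δ * ε / 2 * ((x₁ - x₃) * y₁ * (y₀ - y₂) + x₂ * (y₁ * y₂ + y₀ * y₁ - 2 * y₀ * y₂)) +
      x₂ * (x₁ - x₃) * y₀ * y₁ * y₂ := by
  simp (disch := fun_prop) only [kdv2P1, deriv_fun_add, deriv_fun_sub, deriv_fun_mul, deriv_const,
    deriv_const_add_id, deriv_const_sub_id]
  ring

theorem deriv_kdv2P1_p2 : deriv (fun s => kdv2P1 ε δ q1 q2 p1 s) p2 =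
    δ ^ 2 * ε ^ 2 / 2 * (y₀ - y₁) +
      δ * ε / 2 * (x₁ * (y₀ * y₂ + y₁ * y₂ - 2 * y₀ * y₁) + (x₃ - x₂) * y₂ * (y₁ - y₀)) +
      x₁ * (x₃ - x₂) * y₀ * y₁ * y₂ := by
  simp (disch := fun_prop) only [kdv2P1, deriv_fun_add, deriv_fun_sub, deriv_fun_mul, deriv_const,
    deriv_const_add_id, deriv_const_sub_id]
  ring

theorem deriv_kdv2P2_q1 : deriv (fun s => kdv2P2 ε δ s q2 p1 p2) q1 =
    δ * ε * (2 * x₁ - x₂ - x₃) + x₁ * x₂ * (y₁ + y₂ - y₀) + x₁ * x₃ * (y₁ - y₀ - y₂) := by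
  simp (disch := fun_prop) only [kdv2P2, deriv_fun_add, deriv_fun_sub, deriv_fun_mul, deriv_const,
    deriv_const_add_id, deriv_const_sub_id]
  ring

theorem deriv_kdv2P2_q2 : deriv (fun s => kdv2P2 ε δ q1 s p1 p2) q2 =
    δ * ε * (x₁ - 2 * x₂ + x₃) + x₁ * x₂ * (y₁ + y₂ - y₀) + x₂ * x₃ * (y₂ - y₀ - y₁) := by
  simp (disch := fun_prop) only [kdv2P2, deriv_fun_add, deriv_fun_sub, deriv_fun_mul, deriv_const,
    deriv_const_add_id, deriv_const_sub_id]
  ring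

theorem deriv_kdv2P2_p1 : deriv (fun s => kdv2P2 ε δ q1 q2 s p2) p1 =
    δ * ε * (2 * y₁ - y₀ - y₂) + (x₁ - x₃) * y₁ * (y₀ + y₂) + x₂ * y₁ * (y₂ - y₀) := by
  simp (disch := fun_prop) only [kdv2P2, deriv_fun_add, deriv_fun_sub, deriv_fun_mul, deriv_const,
    deriv_const_add_id, deriv_const_sub_id]
  ring

theorem deriv_kdv2P2_p2 : deriv (fun s => kdv2P2 ε δ q1 q2 p1 s) p2 =
    δ * ε * (2 * y₂ - y₀ - y₁) + x₁ * y₂ * (y₀ - y₁) + (x₃ - x₂) * y₂ * (y₀ + y₁) := by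
  simp (disch := fun_prop) only [kdv2P2, deriv_fun_add, deriv_fun_sub, deriv_fun_mul, deriv_const,
    deriv_const_add_id, deriv_const_sub_id]
  ring

end PartialDerivatives

/-- The two invariants `𝒫₁`, `𝒫₂` of the two-degrees-of-freedom KdV map are in
involution with respect to the canonical Poisson bracket: `{𝒫₁,𝒫₂} = 0` on all of `ℝ⁴`. -/
theorem kdv2_invariants_in_involution (ε δ : ℝ) :
    ∀ q1 q2 p1 p2 : ℝ,
      poissonBracket4 (fun q1 q2 p1 p2 => kdv2P1 ε δ q1 q2 p1 p2)
        (fun q1 q2 p1 p2 => kdv2P2 ε δ q1 q2 p1 p2) q1 q2 p1 p2 = 0 := by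
  intro q1 q2 p1 p2
  rw [poissonBracket4, deriv_kdv2P1_q1, deriv_kdv2P1_q2, deriv_kdv2P1_p1, deriv_kdv2P1_p2,
    deriv_kdv2P2_q1, deriv_kdv2P2_q2, deriv_kdv2P2_p1, deriv_kdv2P2_p2]
  ring
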